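/- arXiv:2108.02768 — 2 statements merged into one kernel-verified Lean document; each statement's English description precedes it below -/
import Mathlib

section
/- The Weisfeiler-Lehman graph isomorphism test is complete on complete colored graphs: it decides two finite complete colored graphs as isomorphic if and only if they are actually isomorphic. -/
/-!
Equal multisets of refined colors project to equal multisets of colors, i.e. color classes
of equal sizes, and matching the color classes gives a color-preserving bijection. Between
complete graphs every bijection is a graph isomorphism. Conversely, refined colors are
invariant under colored isomorphisms of arbitrary graphs.
-/

open Finset

theorem exists_equiv_apply_eq_of_map_univ_eq {α β γ : Type*} [Fintype α] [Fintype β]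
    {f : α → γ} {g : β → γ} (h : univ.val.map f = univ.val.map g) :
    ∃ e : α ≃ β, ∀ a, g (e a) = f a := by
  classical
  have card_fiber (c : γ) : Fintype.card {a // f a = c} = Fintype.card {b // g b = c} := by
    simpa [Fintype.card_subtype, Finset.card_def, Multiset.count_map, eq_comm] using
      congrArg (Multiset.count c) h
  exact ⟨Equiv.ofFiberEquiv fun c ↦ Fintype.equivOfCardEq (card_fiber c),
    Equiv.ofFiberEquiv_map _⟩

namespace SimpleGraph

variable {V W C : Type*}

theorem adj_iff_ne_of_forall_adj {G : SimpleGraph V} (hG : ∀ u v, u ≠ v → G.Adj u v)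
    {u v : V} :
    G.Adj u v ↔ u ≠ v :=
  ⟨G.ne_of_adj, hG u v⟩

def refinedColor [Fintype V] (G : SimpleGraph V) [DecidableRel G.Adj] (c : V → C) (v : V) :
    C × Multiset C :=
  (c v, (univ.filter (G.Adj v)).val.map c)

variable [Fintype V] [Fintype W] {G : SimpleGraph V} {H : SimpleGraph W}
  [DecidableRel G.Adj] [DecidableRel H.Adj] {cG : V → C} {cH : W → C}

theorem Iso.filter_adj_eq_map (φ : G ≃g H) (v : V) :
    univ.filter (H.Adj (φ v)) = (univ.filter (G.Adj v)).map φ.toEquiv.toEmbedding := by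
  rw [← map_univ_equiv φ.toEquiv, filter_map]
  exact congrArg _ (filter_congr fun u _ ↦ φ.map_adj_iff)

theorem Iso.refinedColor_apply (φ : G ≃g H) (hc : ∀ v, cH (φ v) = cG v) (v : V) :
    H.refinedColor cH (φ v) = G.refinedColor cG v := by
  simp only [refinedColor, φ.filter_adj_eq_map, map_val, Multiset.map_map]
  exact Prod.ext (hc v) (Multiset.map_congr rfl fun u _ ↦ hc u)

theorem Iso.map_univ_refinedColor (φ : G ≃g H) (hc : ∀ v, cH (φ v) = cG v) :
    univ.val.map (H.refinedColor cH) = univ.val.map (G.refinedColor cG) := by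
  rw [← Multiset.map_univ_val_equiv φ.toEquiv, Multiset.map_map]
  exact congrArg (Multiset.map · _) (funext (φ.refinedColor_apply hc))

end SimpleGraph

open SimpleGraph in
theorem wl_test_complete_on_complete_colored_graphs_general
    {V W C : Type*} [Fintype V] [Fintype W]
    (G : SimpleGraph V) (H : SimpleGraph W)
    [DecidableRel G.Adj] [DecidableRel H.Adj]
    (hG : ∀ u v : V, u ≠ v → G.Adj u v)
    (hH : ∀ u v : W, u ≠ v → H.Adj u v)
    (cG : V → C) (cH : W → C) :
    (Finset.univ.val.map
        (fun v : V => ((cG v),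
          (Finset.univ.filter (fun u => G.Adj v u)).val.map cG)) =
      Finset.univ.val.map
        (fun w : W => ((cH w),
          (Finset.univ.filter (fun u => H.Adj w u)).val.map cH))) ↔
      (∃ e : V ≃ W, (∀ u v : V, G.Adj u v ↔ H.Adj (e u) (e v)) ∧
        ∀ v : V, cH (e v) = cG v) := by
  change univ.val.map (G.refinedColor cG) = univ.val.map (H.refinedColor cH) ↔ _
  constructor
  · intro h
    have h_colors : univ.val.map cG = univ.val.map cH := by
      simpa [Multiset.map_map, Function.comp_def, refinedColor] using
        congrArg (Multiset.map Prod.fst) h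
    obtain ⟨e, he⟩ := exists_equiv_apply_eq_of_map_univ_eq h_colors
    refine ⟨e, fun u v ↦ ?_, he⟩
    rw [adj_iff_ne_of_forall_adj hG, adj_iff_ne_of_forall_adj hH, e.injective.ne_iff]
  · rintro ⟨e, he_adj, he⟩
    exact (Iso.map_univ_refinedColor ⟨e, (he_adj _ _).symm⟩ he).symm

/-- Completeness of the Weisfeiler-Lehman test on complete colored graphs:
the WL test (comparing the multisets of one-step refined vertex colors,
where a refined color is the pair of a vertex's own color and the multiset
of its neighbors' colors) decides two finite complete colored graphs as
isomorphic iff they are actually isomorphic as colored graphs. -/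
theorem wl_test_complete_on_complete_colored_graphs
    {V W C : Type*} [Fintype V] [Fintype W] [DecidableEq V] [DecidableEq W]
    (G : SimpleGraph V) (H : SimpleGraph W)
    [DecidableRel G.Adj] [DecidableRel H.Adj]
    (hG : ∀ u v : V, u ≠ v → G.Adj u v)
    (hH : ∀ u v : W, u ≠ v → H.Adj u v)
    (cG : V → C) (cH : W → C) :
    (Finset.univ.val.map
        (fun v : V => ((cG v),
          (Finset.univ.filter (fun u => G.Adj v u)).val.map cG)) =
      Finset.univ.val.map
        (fun w : W => ((cH w),
          (Finset.univ.filter (fun u => H.Adj w u)).val.map cH))) ↔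
      (∃ e : V ≃ W, (∀ u v : V, G.Adj u v ↔ H.Adj (e u) (e v)) ∧
        ∀ v : V, cH (e v) = cG v) :=
  wl_test_complete_on_complete_colored_graphs_general G H hG hH cG cH
end

section
/- Every permutation-invariant function f : X^n → ℝ on tuples from a countable domain X admits a DeepSets decomposition: there exist φ : X → ℝ and ρ : ℝ → ℝ such that f(x) = ρ(∑ i φ(x_i)) for all x. -/
/-!
Send the elements of `X` injectively to primes `p a` and put `φ a = log (p a)`. Then
`∑ i, φ (x i) = log ∏ i, p (x i)`, and by unique factorization this product determines the
multiset of the entries of `x`, i.e. `x` up to a permutation. So a permutation-invariant `f` is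
constant on the fibres of `x ↦ ∑ i, φ (x i)` and factors through it.
-/

open Finset Function

theorem Multiset.eq_of_prod_eq_of_forall_prime {M : Type*} [CommMonoidWithZero M]
    [IsCancelMulZero M] [Subsingleton Mˣ] {s t : Multiset M} (h : s.prod = t.prod)
    (hs : ∀ p ∈ s, Prime p) (ht : ∀ p ∈ t, Prime p) : s = t :=
  Quotient.inductionOn₂ s t
    (fun _ _ h hs ht ↦ Multiset.coe_eq_coe.2 (perm_of_prod_eq_prod h hs ht)) h hs ht

theorem Equiv.Perm.exists_eq_comp_of_map_univ_eq {ι α : Type*} [Fintype ι] {x y : ι → α}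
    (h : univ.val.map x = univ.val.map y) : ∃ σ : Equiv.Perm ι, x = y ∘ σ := by
  classical
  have hfiber (a : α) : Nonempty ({i // x i = a} ≃ {i // y i = a}) := by
    have hcount := congrArg (Multiset.count a) h
    rw [Multiset.count_map, Multiset.count_map] at hcount
    rw [← Fintype.card_eq, Fintype.card_subtype, Fintype.card_subtype]
    simp only [eq_comm]
    exact hcount
  exact ⟨Equiv.ofFiberEquiv fun a ↦ (hfiber a).some,
    funext fun i ↦ (Equiv.ofFiberEquiv_map _ i).symm⟩

theorem exists_perm_eq_comp_of_sum_log_eq {ι α : Type*} [Fintype ι] {p : α → ℕ}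
    (hp : Injective p) (hprime : ∀ a, (p a).Prime) {x y : ι → α}
    (h : ∑ i, Real.log (p (x i)) = ∑ i, Real.log (p (y i))) :
    ∃ σ : Equiv.Perm ι, x = y ∘ σ := by
  have hprod : ∏ i, p (x i) = ∏ i, p (y i) := by
    have hexp (a : α) : Real.exp (Real.log (p a)) = p a :=
      Real.exp_log (Nat.cast_pos.2 (hprime a).pos)
    have := congrArg Real.exp h
    simp only [Real.exp_sum, hexp] at this
    exact_mod_cast this
  have hmap : univ.val.map (p ∘ x) = univ.val.map (p ∘ y) :=
    Multiset.eq_of_prod_eq_of_forall_prime hprod (by simp [(hprime _).prime])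
      (by simp [(hprime _).prime])
  refine Equiv.Perm.exists_eq_comp_of_map_univ_eq (Multiset.map_injective hp ?_)
  simpa only [Multiset.map_map] using hmap

/-- Sum-decomposition (DeepSets) theorem for countable domains: every
permutation-invariant function `f : Xⁿ → ℝ` can be written as
`f x = ρ (∑ i, φ (x i))` for some `φ : X → ℝ` and `ρ : ℝ → ℝ`. -/
theorem deepsets_decomposition {X : Type*} [Countable X] {n : ℕ}
    (f : (Fin n → X) → ℝ)
    (hf : ∀ (σ : Equiv.Perm (Fin n)) (x : Fin n → X), f (x ∘ σ) = f x) :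
    ∃ (φ : X → ℝ) (ρ : ℝ → ℝ), ∀ x : Fin n → X, f x = ρ (∑ i, φ (x i)) := by
  obtain ⟨c, hc⟩ := Countable.exists_injective_nat X
  set p : X → ℕ := Nat.nth Nat.Prime ∘ c
  have hp : Injective p := (Nat.nth_injective Nat.infinite_setOfPred_prime).comp hc
  set φ : X → ℝ := fun a ↦ Real.log (p a)
  have hfactors : f.FactorsThrough fun x ↦ ∑ i, φ (x i) := fun x y hxy ↦ by
    obtain ⟨σ, rfl⟩ := exists_perm_eq_comp_of_sum_log_eq hp (fun _ ↦ Nat.prime_nth_prime _) hxy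
    exact hf σ y
  exact ⟨φ, extend _ f 0, fun x ↦ (hfactors.extend_apply 0 x).symm⟩
end
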